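/- arXiv:1601.01981 — 4 statements merged into one kernel-verified Lean document; each statement's English description precedes it below -/
import Mathlib

section
/- Under the stated clustered-model assumptions, let K be the p×r selection matrix with XK = R and let ÿ = (I−H_{S̈})(I−H_T)y for an arbitrary N-vector y. Then the absorption (Frisch–Waugh–Lovell) estimator equals the direct weighted-least-squares coefficient of R: M_R̈ Σ_{i=1}^m R̈_i' W_i ÿ_i = K' M_X Σ_{i=1}^m X_i' W_i y_i. -/
/-!
Write `Ä = absorb W B A = (I - H_B) A`. The column space of `X = [A B]` splits `W`-orthogonally
as that of `B` plus that of `Ä`, so `H_X = H_B + H_Ä`; solving `X Γ = H_X` blockwise shows that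
the top block of the WLS coefficient map `M_X Xᵀ W` is `M_Ä Äᵀ W` (Frisch–Waugh–Lovell). Applied
to `[S T]` the same splitting gives `(I - H_S̈)(I - H_T) = I - H_[S T]`, so `R̈` and `ÿ` are `R`
and `y` with `[S T]` absorbed at once, and the cluster sums are `R̈ᵀ W ÿ` and `Xᵀ W y` because
`W` is block diagonal.
-/

open Matrix MeasureTheory

abbrev Obs {m : ℕ} (n : Fin m → ℕ) : Type := (i : Fin m) × Fin (n i)

/-- The rows of a stacked matrix belonging to cluster `i`. -/
def cRows {m : ℕ} {n : Fin m → ℕ} {c : Type*} (i : Fin m)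
    (M : Matrix (Obs n) c ℝ) : Matrix (Fin (n i)) c ℝ :=
  Matrix.of fun j k => M ⟨i, j⟩ k

/-- The entries of a stacked vector belonging to cluster `i`. -/
def cVec {m : ℕ} {n : Fin m → ℕ} (i : Fin m) (v : Obs n → ℝ) : Fin (n i) → ℝ :=
  fun j => v ⟨i, j⟩

/-- `M_Z = (Zᵀ W Z)⁻¹`. -/
noncomputable def Mmat {Ω q : Type*} [Fintype Ω] [Fintype q] [DecidableEq q]
    (W : Matrix Ω Ω ℝ) (Z : Matrix Ω q ℝ) : Matrix q q ℝ :=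
  (Zᵀ * W * Z)⁻¹

/-- `H_Z = Z M_Z Zᵀ W`. -/
noncomputable def Hmat {Ω q : Type*} [Fintype Ω] [Fintype q] [DecidableEq q]
    (W : Matrix Ω Ω ℝ) (Z : Matrix Ω q ℝ) : Matrix Ω Ω ℝ :=
  Z * Mmat W Z * Zᵀ * W

section Projection

variable {Ω p q : Type*} [Fintype Ω] [Fintype q] [DecidableEq q] {W : Matrix Ω Ω ℝ}

lemma transpose_mul_mul_Hmat {Z : Matrix Ω q ℝ} (hZ : IsUnit (Zᵀ * W * Z).det) :
    Zᵀ * W * Hmat W Z = Zᵀ * W := by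
  calc Zᵀ * W * Hmat W Z = (Zᵀ * W * Z * Mmat W Z) * (Zᵀ * W) := by
        simp only [Hmat, Matrix.mul_assoc]
    _ = Zᵀ * W := by rw [Mmat, Matrix.mul_nonsing_inv _ hZ, Matrix.one_mul]

lemma Hmat_mul_self {Z : Matrix Ω q ℝ} (hZ : IsUnit (Zᵀ * W * Z).det) :
    Hmat W Z * Z = Z := by
  simp only [Hmat, Mmat, Matrix.mul_assoc]
  rw [← Matrix.mul_assoc Zᵀ, Matrix.nonsing_inv_mul _ hZ, Matrix.mul_one]

lemma isIdempotentElem_Hmat {Z : Matrix Ω q ℝ} (hZ : IsUnit (Zᵀ * W * Z).det) :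
    IsIdempotentElem (Hmat W Z) := by
  calc Hmat W Z * Hmat W Z = (Hmat W Z * Z) * (Mmat W Z * (Zᵀ * W)) := by
        simp only [Hmat, Matrix.mul_assoc]
    _ = Hmat W Z := by rw [Hmat_mul_self hZ]; simp only [Hmat, Matrix.mul_assoc]

lemma Hmat_transpose_mul (hW : Wᵀ = W) (Z : Matrix Ω q ℝ) :
    (Hmat W Z)ᵀ * W = W * Hmat W Z := by
  have hM : (Mmat W Z)ᵀ = Mmat W Z := by
    rw [Mmat, Matrix.transpose_nonsing_inv, Matrix.transpose_mul, Matrix.transpose_mul,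
      Matrix.transpose_transpose, hW, Matrix.mul_assoc]
  simp only [Hmat, Matrix.transpose_mul, Matrix.transpose_transpose, hM, hW, Matrix.mul_assoc]

lemma isUnit_det_transpose_mul_mul_of_posDef {Z : Matrix Ω q ℝ} (hW : W.PosDef)
    (hZ : Function.Injective Z.mulVec) : IsUnit (Zᵀ * W * Z).det := by
  rw [← Matrix.conjTranspose_eq_transpose_of_trivial, ← Matrix.isUnit_iff_isUnit_det]
  exact (hW.conjTranspose_mul_mul_same hZ).isUnit

lemma injective_mulVec_of_isUnit_det {Z : Matrix Ω q ℝ}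
    (hZ : IsUnit (Zᵀ * W * Z).det) : Function.Injective Z.mulVec := by
  intro v w hvw
  apply Matrix.mulVec_injective_iff_isUnit.2 ((Matrix.isUnit_iff_isUnit_det _).2 hZ)
  simp only [← Matrix.mulVec_mulVec, hvw]

lemma eq_Mmat_mul_of_mul_eq {Z : Matrix Ω q ℝ} (hZ : IsUnit (Zᵀ * W * Z).det)
    {C : Matrix q p ℝ} {D : Matrix Ω p ℝ} (h : Z * C = D) : C = Mmat W Z * (Zᵀ * W * D) := by
  rw [← h, ← Matrix.mul_assoc _ Z, Mmat, Matrix.nonsing_inv_mul_cancel_left _ _ hZ]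

end Projection

section Injective

variable {Ω p q : Type*} [Fintype p] [Fintype q] {A : Matrix Ω p ℝ} {B : Matrix Ω q ℝ}

lemma injective_mulVec_of_fromCols_right (h : Function.Injective (fromCols A B).mulVec) :
    Function.Injective B.mulVec := fun v w hvw => by
  have := @h (Sum.elim 0 v) (Sum.elim 0 w) (by simp [hvw])
  simpa using congrArg (· ∘ Sum.inr) this

end Injective

section Absorption

variable {Ω p q : Type*} [Fintype Ω] [Fintype q] [DecidableEq Ω] [DecidableEq q] {W : Matrix Ω Ω ℝ}

noncomputable def absorb (W : Matrix Ω Ω ℝ) (B : Matrix Ω q ℝ) (A : Matrix Ω p ℝ) :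
    Matrix Ω p ℝ :=
  (1 - Hmat W B) * A

variable {A : Matrix Ω p ℝ} {B : Matrix Ω q ℝ}

lemma transpose_mul_mul_absorb (hB : IsUnit (Bᵀ * W * B).det) :
    Bᵀ * W * absorb W B A = 0 := by
  rw [absorb, ← Matrix.mul_assoc, Matrix.mul_sub, Matrix.mul_one, transpose_mul_mul_Hmat hB,
    sub_self, Matrix.zero_mul]

lemma transpose_mul_mul_Hmat_absorb [Fintype p] [DecidableEq p]
    (hB : IsUnit (Bᵀ * W * B).det) : Bᵀ * W * Hmat W (absorb W B A) = 0 := by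
  simp only [Hmat, ← Matrix.mul_assoc, transpose_mul_mul_absorb hB, Matrix.zero_mul]

lemma Hmat_mul_Hmat_absorb [Fintype p] [DecidableEq p] (hB : IsUnit (Bᵀ * W * B).det) :
    Hmat W B * Hmat W (absorb W B A) = 0 := by
  calc Hmat W B * Hmat W (absorb W B A)
      = B * Mmat W B * (Bᵀ * W * Hmat W (absorb W B A)) := by simp only [Hmat, Matrix.mul_assoc]
    _ = 0 := by rw [transpose_mul_mul_Hmat_absorb hB, Matrix.mul_zero]

lemma absorb_transpose_mul (hW : Wᵀ = W) :
    (absorb W B A)ᵀ * W = Aᵀ * W * (1 - Hmat W B) := by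
  calc (absorb W B A)ᵀ * W = Aᵀ * ((1 - Hmat W B)ᵀ * W) := by
        rw [absorb, Matrix.transpose_mul, Matrix.mul_assoc]
    _ = Aᵀ * (W * (1 - Hmat W B)) := by
        rw [Matrix.transpose_sub, Matrix.transpose_one, Matrix.sub_mul, Hmat_transpose_mul hW,
          Matrix.one_mul, Matrix.mul_sub W, Matrix.mul_one]
    _ = Aᵀ * W * (1 - Hmat W B) := (Matrix.mul_assoc _ _ _).symm

lemma absorb_transpose_mul_mul_Hmat (hW : Wᵀ = W) (hB : IsUnit (Bᵀ * W * B).det) :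
    (absorb W B A)ᵀ * W * Hmat W B = 0 := by
  rw [absorb_transpose_mul hW, Matrix.mul_assoc, Matrix.sub_mul, Matrix.one_mul,
    (isIdempotentElem_Hmat hB).eq, sub_self, Matrix.mul_zero]

lemma Hmat_absorb_mul_Hmat [Fintype p] [DecidableEq p] (hW : Wᵀ = W)
    (hB : IsUnit (Bᵀ * W * B).det) : Hmat W (absorb W B A) * Hmat W B = 0 := by
  calc Hmat W (absorb W B A) * Hmat W B
      = absorb W B A * Mmat W (absorb W B A) * ((absorb W B A)ᵀ * W * Hmat W B) := by
        simp only [Hmat, Matrix.mul_assoc]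
    _ = 0 := by rw [absorb_transpose_mul_mul_Hmat hW hB, Matrix.mul_zero]

lemma absorb_eq_fromCols_mul [Fintype p] [DecidableEq p] :
    absorb W B A =
      fromCols A B * fromRows (1 : Matrix p p ℝ) (-(Mmat W B * (Bᵀ * W * A))) := by
  rw [absorb, Matrix.fromCols_mul_fromRows, Matrix.sub_mul, Matrix.one_mul, Matrix.mul_one,
    Matrix.mul_neg, ← sub_eq_add_neg]
  simp only [Hmat, Matrix.mul_assoc]

lemma injective_mulVec_absorb [Fintype p] [DecidableEq p]
    (h : Function.Injective (fromCols A B).mulVec) : Function.Injective (absorb W B A).mulVec := by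
  intro v w hvw
  rw [absorb_eq_fromCols_mul, ← Matrix.mulVec_mulVec, ← Matrix.mulVec_mulVec] at hvw
  simpa [Matrix.fromRows_mulVec] using congrArg (· ∘ Sum.inl) (h hvw)

end Absorption

section FrischWaughLovell

variable {Ω p q : Type*} [Fintype Ω] [Fintype p] [Fintype q] [DecidableEq Ω] [DecidableEq p]
  [DecidableEq q] {W : Matrix Ω Ω ℝ} {A : Matrix Ω p ℝ} {B : Matrix Ω q ℝ}

lemma fromCols_mul_fromRows_eq_Hmat_add_Hmat_absorb :
    fromCols A B * fromRows (Mmat W (absorb W B A) * ((absorb W B A)ᵀ * W))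
        (Mmat W B * (Bᵀ * W * (1 - A * (Mmat W (absorb W B A) * ((absorb W B A)ᵀ * W))))) =
      Hmat W B + Hmat W (absorb W B A) := by
  have hÄ : Hmat W (absorb W B A) =
      absorb W B A * (Mmat W (absorb W B A) * ((absorb W B A)ᵀ * W)) := by
    simp only [Hmat, Matrix.mul_assoc]
  rw [Matrix.fromCols_mul_fromRows, hÄ]
  generalize Mmat W (absorb W B A) * ((absorb W B A)ᵀ * W) = G
  simp only [absorb, Hmat, Matrix.mul_sub, Matrix.sub_mul, Matrix.mul_one, Matrix.one_mul,
    Matrix.mul_assoc]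
  abel

lemma transpose_mul_mul_Hmat_add_Hmat_absorb (hW : Wᵀ = W) (hB : IsUnit (Bᵀ * W * B).det)
    (hÄ : IsUnit ((absorb W B A)ᵀ * W * absorb W B A).det) :
    (fromCols A B)ᵀ * W * (Hmat W B + Hmat W (absorb W B A)) =
      (fromCols A B)ᵀ * W := by
  rw [Matrix.transpose_fromCols, Matrix.fromRows_mul, Matrix.fromRows_mul]
  congr 1
  · have h := transpose_mul_mul_Hmat hÄ
    rw [absorb_transpose_mul hW, Matrix.mul_assoc, Matrix.sub_mul, Matrix.one_mul,
      Hmat_mul_Hmat_absorb hB, sub_zero] at h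
    rw [Matrix.mul_add, h, Matrix.mul_sub, Matrix.mul_one, add_sub_cancel]
  · rw [Matrix.mul_add, transpose_mul_mul_Hmat hB, transpose_mul_mul_Hmat_absorb hB, add_zero]

theorem Mmat_fromCols_mul_transpose_mul (hW : Wᵀ = W) (hB : IsUnit (Bᵀ * W * B).det)
    (hÄ : IsUnit ((absorb W B A)ᵀ * W * absorb W B A).det)
    (hX : IsUnit ((fromCols A B)ᵀ * W * fromCols A B).det) :
    Mmat W (fromCols A B) * ((fromCols A B)ᵀ * W) =
      fromRows (Mmat W (absorb W B A) * ((absorb W B A)ᵀ * W))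
        (Mmat W B * (Bᵀ * W * (1 - A * (Mmat W (absorb W B A) * ((absorb W B A)ᵀ * W))))) := by
  rw [eq_Mmat_mul_of_mul_eq hX fromCols_mul_fromRows_eq_Hmat_add_Hmat_absorb,
    transpose_mul_mul_Hmat_add_Hmat_absorb hW hB hÄ]

theorem Hmat_fromCols (hW : Wᵀ = W) (hB : IsUnit (Bᵀ * W * B).det)
    (hÄ : IsUnit ((absorb W B A)ᵀ * W * absorb W B A).det)
    (hX : IsUnit ((fromCols A B)ᵀ * W * fromCols A B).det) :
    Hmat W (fromCols A B) = Hmat W B + Hmat W (absorb W B A) := by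
  rw [Hmat, Matrix.mul_assoc, Matrix.mul_assoc, Mmat_fromCols_mul_transpose_mul hW hB hÄ hX,
    fromCols_mul_fromRows_eq_Hmat_add_Hmat_absorb]

theorem one_sub_Hmat_fromCols (hW : Wᵀ = W) (hB : IsUnit (Bᵀ * W * B).det)
    (hÄ : IsUnit ((absorb W B A)ᵀ * W * absorb W B A).det)
    (hX : IsUnit ((fromCols A B)ᵀ * W * fromCols A B).det) :
    1 - Hmat W (fromCols A B) = (1 - Hmat W (absorb W B A)) * (1 - Hmat W B) := by
  rw [Hmat_fromCols hW hB hÄ hX, Matrix.sub_mul, Matrix.one_mul, Matrix.mul_sub, Matrix.mul_one,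
    Hmat_absorb_mul_Hmat hW hB, sub_zero]
  abel

theorem fromRows_one_zero_transpose_mul_Mmat_mul (hW : Wᵀ = W) (hB : IsUnit (Bᵀ * W * B).det)
    (hÄ : IsUnit ((absorb W B A)ᵀ * W * absorb W B A).det)
    (hX : IsUnit ((fromCols A B)ᵀ * W * fromCols A B).det) :
    (fromRows (1 : Matrix p p ℝ) (0 : Matrix q p ℝ))ᵀ * Mmat W (fromCols A B) *
        ((fromCols A B)ᵀ * W) =
      Mmat W (absorb W B A) * ((absorb W B A)ᵀ * W) := by
  rw [Matrix.mul_assoc, Mmat_fromCols_mul_transpose_mul hW hB hÄ hX, Matrix.transpose_fromRows,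
    Matrix.fromCols_mul_fromRows, Matrix.transpose_one, Matrix.transpose_zero, Matrix.one_mul,
    Matrix.zero_mul, add_zero]

end FrischWaughLovell

section Clusters

variable {m : ℕ} {n : Fin m → ℕ}

lemma dotProduct_eq_sum_cVec (x y : Obs n → ℝ) : x ⬝ᵥ y = ∑ i, cVec i x ⬝ᵥ cVec i y := by
  simp only [dotProduct, cVec]
  exact Fintype.sum_sigma _

lemma cVec_blockDiagonal'_mulVec (Wb : ∀ i : Fin m, Matrix (Fin (n i)) (Fin (n i)) ℝ)
    (x : Obs n → ℝ) (i : Fin m) :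
    cVec i (blockDiagonal' Wb *ᵥ x) = Wb i *ᵥ cVec i x := by
  funext j
  rw [cVec, Matrix.mulVec, dotProduct_eq_sum_cVec, Finset.sum_eq_single i]
  · congr 1
    funext j'
    exact Matrix.blockDiagonal'_apply_eq Wb i j j'
  · intro i' _ hi'
    have hzero : cVec i' (fun p => blockDiagonal' Wb ⟨i, j⟩ p) = 0 :=
      funext fun j' => Matrix.blockDiagonal'_apply_ne Wb j j' hi'.symm
    rw [hzero, zero_dotProduct]
  · simp

lemma posDef_blockDiagonal' {Wb : ∀ i : Fin m, Matrix (Fin (n i)) (Fin (n i)) ℝ}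
    (hWb : ∀ i, (Wb i).PosDef) : (blockDiagonal' Wb).PosDef := by
  refine Matrix.PosDef.of_dotProduct_mulVec_pos
    (Matrix.isHermitian_blockDiagonal'_iff.2 fun i => (hWb i).1) fun x hx => ?_
  rw [dotProduct_eq_sum_cVec]
  obtain ⟨⟨i, j⟩, hij⟩ := Function.ne_iff.1 hx
  refine Finset.sum_pos' (fun i _ => ?_) ⟨i, Finset.mem_univ i, ?_⟩
  · rw [cVec_blockDiagonal'_mulVec]
    exact (hWb i).posSemidef.dotProduct_mulVec_nonneg _
  · rw [cVec_blockDiagonal'_mulVec]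
    exact (hWb i).dotProduct_mulVec_pos fun h => hij (congrFun h j)

lemma sum_cRows_transpose_mul_mulVec {c : Type*} [Fintype c]
    (Wb : ∀ i : Fin m, Matrix (Fin (n i)) (Fin (n i)) ℝ) (A : Matrix (Obs n) c ℝ)
    (v : Obs n → ℝ) :
    ∑ i : Fin m, ((cRows i A)ᵀ * Wb i) *ᵥ cVec i v = (Aᵀ * blockDiagonal' Wb) *ᵥ v := by
  funext k
  rw [Finset.sum_apply, ← Matrix.mulVec_mulVec, Matrix.mulVec, dotProduct_eq_sum_cVec]
  refine Finset.sum_congr rfl fun i _ => ?_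
  rw [← Matrix.mulVec_mulVec, cVec_blockDiagonal'_mulVec]
  rfl

end Clusters

/-- Frisch–Waugh–Lovell / absorption identity: the absorption estimator
equals the `R`-coefficient block of the direct WLS estimator:
`M_R̈ Σᵢ R̈ᵢᵀ Wᵢ ÿᵢ = Kᵀ M_X Σᵢ Xᵢᵀ Wᵢ yᵢ`. -/
theorem absorption_equals_direct_WLS
    {m r s t : ℕ} {n : Fin m → ℕ}
    (Wb : ∀ i : Fin m, Matrix (Fin (n i)) (Fin (n i)) ℝ)
    (hWpd : ∀ i, (Wb i).PosDef)
    (W : Matrix (Obs n) (Obs n) ℝ) (hW : W = Matrix.blockDiagonal' Wb)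
    (R : Matrix (Obs n) (Fin r) ℝ) (S : Matrix (Obs n) (Fin s) ℝ)
    (T : Matrix (Obs n) (Fin t) ℝ)
    (X : Matrix (Obs n) (Fin r ⊕ (Fin s ⊕ Fin t)) ℝ)
    (hX : X = Matrix.fromCols R (Matrix.fromCols S T))
    (hfullrank : IsUnit (Xᵀ * W * X).det)
    -- the selection matrix K with X K = R
    (K : Matrix (Fin r ⊕ (Fin s ⊕ Fin t)) (Fin r) ℝ) (hK : X * K = R)
    -- absorbed matrices
    (Sd : Matrix (Obs n) (Fin s) ℝ) (hSd : Sd = (1 - Hmat W T) * S)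
    (Rd : Matrix (Obs n) (Fin r) ℝ)
    (hRd : Rd = (1 - Hmat W Sd) * ((1 - Hmat W T) * R))
    -- an arbitrary outcome vector and its absorbed version ÿ = (I−H_S̈)(I−H_T) y
    (y : Obs n → ℝ)
    (yd : Obs n → ℝ) (hyd : yd = ((1 - Hmat W Sd) * (1 - Hmat W T)) *ᵥ y) :
    Mmat W Rd *ᵥ ∑ i : Fin m, ((cRows i Rd)ᵀ * Wb i) *ᵥ cVec i yd
      = (Kᵀ * Mmat W X) *ᵥ ∑ i : Fin m, ((cRows i X)ᵀ * Wb i) *ᵥ cVec i y := by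
  have hWpos : W.PosDef := hW ▸ posDef_blockDiagonal' hWpd
  have hWsymm : Wᵀ = W := hWpos.1
  have hXinj : Function.Injective (fromCols R (fromCols S T)).mulVec :=
    hX ▸ injective_mulVec_of_isUnit_det hfullrank
  have hZinj := injective_mulVec_of_fromCols_right hXinj
  have hTunit := isUnit_det_transpose_mul_mul_of_posDef hWpos
    (injective_mulVec_of_fromCols_right hZinj)
  have hSdunit := isUnit_det_transpose_mul_mul_of_posDef hWpos
    (injective_mulVec_absorb (W := W) hZinj)
  have hZunit := isUnit_det_transpose_mul_mul_of_posDef hWpos hZinj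
  have hRdunit := isUnit_det_transpose_mul_mul_of_posDef hWpos
    (injective_mulVec_absorb (W := W) hXinj)
  have hP : (1 - Hmat W Sd) * (1 - Hmat W T) = 1 - Hmat W (fromCols S T) := by
    rw [hSd]
    exact (one_sub_Hmat_fromCols hWsymm hTunit hSdunit hZunit).symm
  have hRd' : Rd = absorb W (fromCols S T) R := by
    rw [hRd, ← Matrix.mul_assoc, hP, absorb]
  have hKsel : K = fromRows 1 0 := by
    have h10 : X * fromRows (1 : Matrix (Fin r) (Fin r) ℝ) (0 : Matrix (Fin s ⊕ Fin t) (Fin r) ℝ)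
        = R := by
      rw [hX, Matrix.fromCols_mul_fromRows, Matrix.mul_one, Matrix.mul_zero, add_zero]
    rw [eq_Mmat_mul_of_mul_eq hfullrank hK, eq_Mmat_mul_of_mul_eq hfullrank h10]
  have hcoef : Mmat W Rd * (Rdᵀ * W * (1 - Hmat W (fromCols S T))) =
      Kᵀ * Mmat W X * (Xᵀ * W) := by
    rw [hRd', Matrix.mul_sub, Matrix.mul_one, absorb_transpose_mul_mul_Hmat hWsymm hZunit,
      sub_zero, hKsel, hX, fromRows_one_zero_transpose_mul_Mmat_mul hWsymm hZunit hRdunit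
      (hX ▸ hfullrank)]
  rw [sum_cRows_transpose_mul_mulVec, sum_cRows_transpose_mul_mulVec, ← hW, hyd, hP]
  simp only [Matrix.mulVec_mulVec, hcoef]
end

section
/- Under the stated clustered-model assumptions, suppose the within-cluster fixed effects are nested (T_h T_k' = 0 for h ≠ k) and L_i = Ü'WÜ − Ü_i'W_iÜ_i = Σ_{k≠i} Ü_k'W_kÜ_k is invertible. Define the N×(r+s) matrix Z block-wise by Z_i = 0 and Z_k = −Ü_k L_i^{-1} M_Ü^{-1} for k ≠ i. Then (I − H_X)_i Z = Ü_i; in particular, Ü_i lies in the column span of (I − H_X)_i. -/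
open Matrix MeasureTheory

/-!
`[Ü T]` is `[U T]` times a unimodular block matrix, so it spans the same columns, and `Ü` is
`W`-orthogonal to `T`; hence `H_X = H_Ü + H_T` (Frisch–Waugh–Lovell), and the full rank of `X`
makes both Gram matrices invertible. Now `Z` vanishes on cluster `i`. Nesting gives
`T_p (T'WT)⁻¹ T_q' = 0` for `p ≠ q`, so `(H_T Z)_i = 0`; and `Ü'WZ = -L_i L_i⁻¹ M_Ü⁻¹ = -M_Ü⁻¹`,
so `(H_Ü Z)_i = -Ü_i`. Therefore `((I - H_X) Z)_i = 0 + Ü_i - 0`.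
-/

namespace Matrix

theorem dotProduct_blockDiagonal'_mulVec {o R : Type*} [Fintype o] [DecidableEq o]
    {p : o → Type*} [∀ k, Fintype (p k)] [∀ k, DecidableEq (p k)] [CommSemiring R]
    (M : ∀ k, Matrix (p k) (p k) R) (x y : (k : o) × p k → R) :
    x ⬝ᵥ (blockDiagonal' M *ᵥ y) =
      ∑ k, (fun j => x ⟨k, j⟩) ⬝ᵥ (M k *ᵥ fun j => y ⟨k, j⟩) := by
  simp only [dotProduct, mulVec, ← Finset.univ_sigma_univ, Finset.sum_sigma, blockDiagonal'_apply]
  refine Finset.sum_congr rfl fun k _ => Finset.sum_congr rfl fun j _ => ?_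
  congr 1
  rw [Finset.sum_eq_single k (fun k' _ hk' => by simp [Ne.symm hk']) (by simp)]
  simp

theorem PosDef.blockDiagonal' {o R : Type*} [Fintype o] [DecidableEq o]
    {p : o → Type*} [∀ k, Fintype (p k)] [∀ k, DecidableEq (p k)] [CommRing R] [PartialOrder R]
    [StarRing R] [IsOrderedCancelAddMonoid R] {M : ∀ k, Matrix (p k) (p k) R}
    (hM : ∀ k, (M k).PosDef) :
    (Matrix.blockDiagonal' M).PosDef := by
  refine .of_dotProduct_mulVec_pos (isHermitian_blockDiagonal'_iff.mpr fun k => (hM k).1)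
    fun x hx => ?_
  obtain ⟨⟨k, j⟩, hkj⟩ := Function.ne_iff.mp hx
  rw [dotProduct_blockDiagonal'_mulVec]
  refine Finset.sum_pos' (fun k _ => (hM k).posSemidef.dotProduct_mulVec_nonneg _)
    ⟨k, Finset.mem_univ _, (hM k).dotProduct_mulVec_pos fun h => hkj ?_⟩
  simpa using congrFun h j

theorem transpose_mul_mul_apply {o a b R : Type*} [Fintype o] [CommSemiring R]
    (P : Matrix o a R) (M : Matrix o o R) (Q : Matrix o b R) (x : a) (y : b) :
    (Pᵀ * M * Q) x y = Pᵀ x ⬝ᵥ (M *ᵥ Qᵀ y) := by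
  rw [Matrix.mul_assoc, mul_apply']
  rfl

/-- `G_q = A_qᵀ B_q A_q` commutes with `G = ∑ G_k`, since `G_q G_k = G_k G_q = 0` for `k ≠ q`;
hence `A_p G⁻¹ A_qᵀ = A_p G⁻¹ G⁻¹ G_q A_qᵀ = A_p G_q G⁻¹ G⁻¹ A_qᵀ = 0`. A singular `G` has
`G⁻¹ = 0`. -/
theorem mul_inv_sum_mul_transpose_eq_zero {ι R c : Type*} [Fintype ι] [CommRing R]
    [Fintype c] [DecidableEq c] {r : ι → Type*} [∀ k, Fintype (r k)]
    (A : ∀ k, Matrix (r k) c R) (B : ∀ k, Matrix (r k) (r k) R)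
    (hA : ∀ p q, p ≠ q → A p * (A q)ᵀ = 0) {p q : ι} (hpq : p ≠ q) :
    A p * (∑ k, (A k)ᵀ * B k * A k)⁻¹ * (A q)ᵀ = 0 := by
  set G := ∑ k, (A k)ᵀ * B k * A k
  by_cases hG : IsUnit G.det
  swap
  · simp [nonsing_inv_apply_not_isUnit _ hG]
  set Gq := (A q)ᵀ * B q * A q
  have hAG : ∀ j k, j ≠ k → A j * ((A k)ᵀ * B k * A k) = 0 := fun j k hjk => by
    simp only [← Matrix.mul_assoc, hA j k hjk, Matrix.zero_mul]
  have hGA : G * (A q)ᵀ = Gq * (A q)ᵀ := by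
    rw [Matrix.sum_mul, Finset.sum_eq_single q (fun k _ hkq => by
      simp only [Matrix.mul_assoc, hA k q hkq, Matrix.mul_zero]) (by simp)]
  have hcomm : Commute Gq G := by
    have hGG : ∀ k, k ≠ q → Gq * ((A k)ᵀ * B k * A k) = 0 ∧ ((A k)ᵀ * B k * A k) * Gq = 0 :=
      fun k hkq => ⟨by simp only [Gq, Matrix.mul_assoc _ (A q), hAG q k hkq.symm, Matrix.mul_zero],
        by simp only [Gq, Matrix.mul_assoc _ (A k), hAG k q hkq, Matrix.mul_zero]⟩
    show Gq * G = G * Gq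
    rw [Finset.mul_sum, Finset.sum_mul, Finset.sum_eq_single q (fun k _ hkq => (hGG k hkq).1)
      (by simp), Finset.sum_eq_single q (fun k _ hkq => (hGG k hkq).2) (by simp)]
  have hcomm' : Commute Gq G⁻¹ := by
    have hGu : IsUnit G := (isUnit_iff_isUnit_det G).mpr hG
    simpa only [coe_units_inv, hGu.unit_spec] using hcomm.units_inv_right (u := hGu.unit)
  calc A p * G⁻¹ * (A q)ᵀ = A p * (G⁻¹ * G⁻¹) * (G * (A q)ᵀ) := by
        simp only [Matrix.mul_assoc, nonsing_inv_mul_cancel_left _ _ hG]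
    _ = A p * (G⁻¹ * G⁻¹ * Gq) * (A q)ᵀ := by rw [hGA]; simp only [Matrix.mul_assoc]
    _ = A p * Gq * (G⁻¹ * G⁻¹ * (A q)ᵀ) := by
        rw [← (hcomm'.mul_right hcomm').eq]; simp only [Matrix.mul_assoc]
    _ = 0 := by rw [hAG p q hpq, Matrix.zero_mul]

theorem mulVec_injective_of_fromCols {R ι a b : Type*} [Semiring R] [Fintype a] [Fintype b]
    {A : Matrix ι a R} {B : Matrix ι b R}
    (h : Function.Injective (fromCols A B).mulVec) :
    Function.Injective A.mulVec ∧ Function.Injective B.mulVec :=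
  ⟨fun v w hvw => funext fun j =>
    congrFun (@h (Sum.elim v 0) (Sum.elim w 0) (by simpa using hvw)) (Sum.inl j),
   fun v w hvw => funext fun j =>
    congrFun (@h (Sum.elim 0 v) (Sum.elim 0 w) (by simpa using hvw)) (Sum.inr j)⟩

end Matrix

section Projection

variable {Ω a b : Type*} [Fintype Ω] [Fintype a] [Fintype b] [DecidableEq a] [DecidableEq b]

theorem Hmat_mul_of_isUnit_det (W : Matrix Ω Ω ℝ) (X : Matrix Ω a ℝ) {C : Matrix a a ℝ}
    (hC : IsUnit C.det) : Hmat W (X * C) = Hmat W X := by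
  have hCt : IsUnit Cᵀ.det := by rwa [det_transpose]
  have hgram : (X * C)ᵀ * W * (X * C) = Cᵀ * (Xᵀ * W * X) * C := by
    simp only [transpose_mul, Matrix.mul_assoc]
  simp only [Hmat, Mmat]
  rw [hgram, Matrix.mul_inv_rev, Matrix.mul_inv_rev, transpose_mul]
  calc X * C * (C⁻¹ * ((Xᵀ * W * X)⁻¹ * Cᵀ⁻¹)) * (Cᵀ * Xᵀ) * W
      = X * (C * C⁻¹) * (Xᵀ * W * X)⁻¹ * (Cᵀ⁻¹ * Cᵀ) * Xᵀ * W := by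
        simp only [Matrix.mul_assoc]
    _ = X * (Xᵀ * W * X)⁻¹ * Xᵀ * W := by
        rw [mul_nonsing_inv _ hC, nonsing_inv_mul _ hCt, Matrix.mul_one, Matrix.mul_one]

theorem fromCols_mul_fromBlocks_eq_residual [DecidableEq Ω] (W : Matrix Ω Ω ℝ)
    (U : Matrix Ω a ℝ) (T : Matrix Ω b ℝ) :
    fromCols U T * (fromBlocks 1 0 (-(Mmat W T * Tᵀ * W * U)) 1 : Matrix (a ⊕ b) (a ⊕ b) ℝ) =
      fromCols ((1 - Hmat W T) * U) T := by
  simp only [fromCols_mul_fromBlocks, Hmat, Matrix.sub_mul, Matrix.one_mul, Matrix.mul_one,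
    Matrix.mul_neg, Matrix.mul_zero, zero_add, Matrix.mul_assoc]
  rw [← sub_eq_add_neg]

theorem Hmat_fromCols_residual [DecidableEq Ω] (W : Matrix Ω Ω ℝ) (U : Matrix Ω a ℝ)
    (T : Matrix Ω b ℝ) :
    Hmat W (fromCols ((1 - Hmat W T) * U) T) = Hmat W (fromCols U T) := by
  rw [← fromCols_mul_fromBlocks_eq_residual]
  exact Hmat_mul_of_isUnit_det W _ (by simp)

theorem isUnit_det_gram_mul (W : Matrix Ω Ω ℝ) {X : Matrix Ω a ℝ} {C : Matrix a a ℝ}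
    (hX : IsUnit (Xᵀ * W * X).det) (hC : IsUnit C.det) :
    IsUnit ((X * C)ᵀ * W * (X * C)).det := by
  have hgram : (X * C)ᵀ * W * (X * C) = Cᵀ * (Xᵀ * W * X) * C := by
    simp only [transpose_mul, Matrix.mul_assoc]
  rw [hgram, det_mul, det_mul, det_transpose]
  exact (hC.mul hX).mul hC

theorem mulVec_injective_of_isUnit_det_gram (W : Matrix Ω Ω ℝ) {X : Matrix Ω a ℝ}
    (hX : IsUnit (Xᵀ * W * X).det) : Function.Injective X.mulVec := by
  have hgram : Function.Injective (Xᵀ * W * X).mulVec :=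
    mulVec_injective_iff_isUnit.mpr ((isUnit_iff_isUnit_det _).mpr hX)
  refine Function.Injective.of_comp (f := (Xᵀ * W).mulVec) ?_
  simpa only [Function.comp_def, mulVec_mulVec] using hgram

theorem isUnit_det_gram_of_posDef {W : Matrix Ω Ω ℝ} (hW : W.PosDef) {X : Matrix Ω a ℝ}
    (hX : Function.Injective X.mulVec) : IsUnit (Xᵀ * W * X).det :=
  (isUnit_iff_isUnit_det _).mp (hW.conjTranspose_mul_mul_same hX).isUnit

theorem isUnit_det_gram_residual [DecidableEq Ω] {W : Matrix Ω Ω ℝ} (hW : W.PosDef)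
    {U : Matrix Ω a ℝ} {T : Matrix Ω b ℝ} (hX : IsUnit ((fromCols U T)ᵀ * W * fromCols U T).det) :
    IsUnit (((1 - Hmat W T) * U)ᵀ * W * ((1 - Hmat W T) * U)).det ∧
      IsUnit (Tᵀ * W * T).det := by
  have hY := isUnit_det_gram_mul W hX
    (C := (fromBlocks 1 0 (-(Mmat W T * Tᵀ * W * U)) 1 : Matrix (a ⊕ b) (a ⊕ b) ℝ)) (by simp)
  rw [fromCols_mul_fromBlocks_eq_residual] at hY
  obtain ⟨hUd, hT⟩ := mulVec_injective_of_fromCols (mulVec_injective_of_isUnit_det_gram W hY)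
  exact ⟨isUnit_det_gram_of_posDef hW hUd, isUnit_det_gram_of_posDef hW hT⟩

theorem transpose_mul_mul_residual [DecidableEq Ω] (W : Matrix Ω Ω ℝ) {c : Type*}
    (U : Matrix Ω c ℝ) {T : Matrix Ω b ℝ} (hT : IsUnit (Tᵀ * W * T).det) :
    Tᵀ * W * ((1 - Hmat W T) * U) = 0 := by
  simp only [Hmat, Mmat, Matrix.sub_mul, Matrix.mul_sub, Matrix.one_mul]
  calc Tᵀ * W * U - Tᵀ * W * (T * (Tᵀ * W * T)⁻¹ * Tᵀ * W * U)
      = Tᵀ * W * U - (Tᵀ * W * T) * (Tᵀ * W * T)⁻¹ * (Tᵀ * W * U) := by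
        simp only [Matrix.mul_assoc]
    _ = 0 := by rw [mul_nonsing_inv _ hT, Matrix.one_mul, sub_self]

theorem Hmat_fromCols_of_orthogonal (W : Matrix Ω Ω ℝ) {A : Matrix Ω a ℝ} {B : Matrix Ω b ℝ}
    (hA : IsUnit (Aᵀ * W * A).det) (hB : IsUnit (Bᵀ * W * B).det)
    (hAB : Aᵀ * W * B = 0) (hBA : Bᵀ * W * A = 0) :
    Hmat W (fromCols A B) = Hmat W A + Hmat W B := by
  have hgram : (fromCols A B)ᵀ * W * fromCols A B = fromBlocks (Aᵀ * W * A) 0 0 (Bᵀ * W * B) := by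
    rw [transpose_fromCols, fromRows_mul, fromRows_mul_fromCols, hAB, hBA]
  have hinv : (fromBlocks (Aᵀ * W * A) 0 0 (Bᵀ * W * B))⁻¹ =
      fromBlocks (Aᵀ * W * A)⁻¹ 0 0 (Bᵀ * W * B)⁻¹ := by
    rw [inv_fromBlocks_zero₂₁_of_isUnit_iff _ _ _ (by simp only [isUnit_iff_isUnit_det, hA, hB])]
    simp
  simp only [Hmat, Mmat]
  rw [hgram, hinv]
  simp only [transpose_fromCols, fromCols_mul_fromBlocks, fromCols_mul_fromRows, Matrix.mul_zero,
    add_zero, zero_add, Matrix.add_mul]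

theorem Hmat_fromCols_eq_add [DecidableEq Ω] {W : Matrix Ω Ω ℝ} (hW : W.PosDef)
    {U : Matrix Ω a ℝ} {T : Matrix Ω b ℝ} (hX : IsUnit ((fromCols U T)ᵀ * W * fromCols U T).det) :
    Hmat W (fromCols U T) = Hmat W ((1 - Hmat W T) * U) + Hmat W T := by
  obtain ⟨hUd, hT⟩ := isUnit_det_gram_residual hW hX
  have hTUd := transpose_mul_mul_residual W U hT
  have hWt : Wᵀ = W := by
    rw [← conjTranspose_eq_transpose_of_trivial, hW.isHermitian.eq]
  have hUdT : ((1 - Hmat W T) * U)ᵀ * W * T = 0 := by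
    simpa only [transpose_mul, transpose_transpose, hWt, transpose_zero, Matrix.mul_assoc]
      using congrArg transpose hTUd
  rw [← Hmat_fromCols_residual, Hmat_fromCols_of_orthogonal W hUd hT hUdT hTUd]

end Projection

section Clusters

variable {m : ℕ} {n : Fin m → ℕ} {a b c : Type*}

theorem cRows_mul [Fintype a] (i : Fin m) (A : Matrix (Obs n) a ℝ) (B : Matrix a c ℝ) :
    cRows i (A * B) = cRows i A * B :=
  rfl

theorem cRows_sub (i : Fin m) (A B : Matrix (Obs n) c ℝ) :
    cRows i (A - B) = cRows i A - cRows i B :=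
  rfl

theorem transpose_mul_blockDiagonal'_mul (Wb : ∀ k : Fin m, Matrix (Fin (n k)) (Fin (n k)) ℝ)
    (A : Matrix (Obs n) a ℝ) (B : Matrix (Obs n) b ℝ) :
    Aᵀ * blockDiagonal' Wb * B = ∑ k, (cRows k A)ᵀ * Wb k * cRows k B := by
  ext x y
  simp only [Matrix.sum_apply, transpose_mul_mul_apply, dotProduct_blockDiagonal'_mulVec]
  rfl

theorem transpose_mul_blockDiagonal'_mul_eq_sum_erase
    (Wb : ∀ k : Fin m, Matrix (Fin (n k)) (Fin (n k)) ℝ) (A : Matrix (Obs n) a ℝ)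
    {Z : Matrix (Obs n) b ℝ} {i : Fin m} (hZi : cRows i Z = 0) :
    Aᵀ * blockDiagonal' Wb * Z = ∑ k ∈ Finset.univ.erase i, (cRows k A)ᵀ * Wb k * cRows k Z := by
  rw [transpose_mul_blockDiagonal'_mul, ← Finset.add_sum_erase _ _ (Finset.mem_univ i), hZi,
    Matrix.mul_zero, zero_add]

theorem transpose_mul_blockDiagonal'_mul_of_cRows_eq [Fintype b]
    (Wb : ∀ k : Fin m, Matrix (Fin (n k)) (Fin (n k)) ℝ) (A : Matrix (Obs n) a ℝ)
    (B : Matrix (Obs n) b ℝ) (C : Matrix b c ℝ) {Z : Matrix (Obs n) c ℝ} {i : Fin m}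
    (hZi : cRows i Z = 0) (hZ : ∀ k, k ≠ i → cRows k Z = cRows k B * C) :
    Aᵀ * blockDiagonal' Wb * Z =
      (Aᵀ * blockDiagonal' Wb * B - (cRows i A)ᵀ * Wb i * cRows i B) * C := by
  rw [transpose_mul_blockDiagonal'_mul_eq_sum_erase Wb A hZi, transpose_mul_blockDiagonal'_mul,
    ← Finset.sum_erase_eq_sub (Finset.mem_univ i), Matrix.sum_mul]
  refine Finset.sum_congr rfl fun k hk => ?_
  simp only [hZ k (Finset.ne_of_mem_erase hk), Matrix.mul_assoc]

theorem cRows_Hmat_mul [Fintype a] [DecidableEq a] (i : Fin m) (W : Matrix (Obs n) (Obs n) ℝ)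
    (A : Matrix (Obs n) a ℝ) (Z : Matrix (Obs n) c ℝ) :
    cRows i (Hmat W A * Z) = cRows i A * (Mmat W A * (Aᵀ * W * Z)) := by
  simp only [Hmat, cRows_mul, Matrix.mul_assoc]

theorem cRows_Hmat_blockDiagonal'_mul_eq_zero [Fintype b] [DecidableEq b]
    (Wb : ∀ k : Fin m, Matrix (Fin (n k)) (Fin (n k)) ℝ) (T : Matrix (Obs n) b ℝ)
    (hT : ∀ p q : Fin m, p ≠ q → cRows p T * (cRows q T)ᵀ = 0) {Z : Matrix (Obs n) c ℝ}
    {i : Fin m} (hZi : cRows i Z = 0) : cRows i (Hmat (blockDiagonal' Wb) T * Z) = 0 := by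
  rw [cRows_Hmat_mul, transpose_mul_blockDiagonal'_mul_eq_sum_erase Wb T hZi, Mmat,
    transpose_mul_blockDiagonal'_mul, Matrix.mul_sum, Matrix.mul_sum]
  refine Finset.sum_eq_zero fun k hk => ?_
  simp only [← Matrix.mul_assoc]
  rw [mul_inv_sum_mul_transpose_eq_zero _ _ hT (Finset.ne_of_mem_erase hk).symm]
  simp

end Clusters

/-- with nested within-cluster fixed effects and
`L_i = ÜᵀWÜ − Ü_iᵀW_iÜ_i` invertible, the block-wise matrix `Z` with `Z_i = 0` and
`Z_k = −Ü_k L_i⁻¹ M_Ü⁻¹` for `k ≠ i` satisfies `(I − H_X)_i Z = Ü_i`; in particular the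
columns of `Ü_iᵀ` lie in the column span of `(I − H_X)_i`. -/
theorem Ud_in_column_span_of_residual_projection
    {m u t : ℕ} {n : Fin m → ℕ}
    (Wb : ∀ i : Fin m, Matrix (Fin (n i)) (Fin (n i)) ℝ)
    (hWpd : ∀ i, (Wb i).PosDef)
    (W : Matrix (Obs n) (Obs n) ℝ) (hW : W = Matrix.blockDiagonal' Wb)
    (U : Matrix (Obs n) (Fin u) ℝ) (T : Matrix (Obs n) (Fin t) ℝ)
    (X : Matrix (Obs n) (Fin u ⊕ Fin t) ℝ) (hX : X = Matrix.fromCols U T)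
    (hfullrank : IsUnit (Xᵀ * W * X).det)
    (hnested : ∀ h k : Fin m, h ≠ k → cRows h T * (cRows k T)ᵀ = 0)
    (Ud : Matrix (Obs n) (Fin u) ℝ) (hUd : Ud = (1 - Hmat W T) * U)
    -- the cluster of interest
    (i : Fin m)
    (L : Matrix (Fin u) (Fin u) ℝ)
    (hL : L = Udᵀ * W * Ud - (cRows i Ud)ᵀ * Wb i * cRows i Ud)
    (hLinv : IsUnit L.det)
    -- Z is defined block-wise: Z_i = 0 and Z_k = −Ü_k L⁻¹ M_Ü⁻¹ for k ≠ i
    (Z : Matrix (Obs n) (Fin u) ℝ)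
    (hZ : ∀ (a : Obs n) (c : Fin u),
      Z a c = if a.1 = i then 0
        else (-(cRows a.1 Ud * L⁻¹ * (Mmat W Ud)⁻¹)) a.2 c) :
    cRows i (1 - Hmat W X) * Z = cRows i Ud := by
  subst hW hX
  have hWpos := PosDef.blockDiagonal' hWpd
  have hS : IsUnit (Mmat (blockDiagonal' Wb) Ud).det :=
    isUnit_nonsing_inv_det _ (hUd ▸ (isUnit_det_gram_residual hWpos hfullrank).1)
  have hZi : cRows i Z = 0 := by
    ext j c
    simpa [cRows] using hZ ⟨i, j⟩ c
  have hZk : ∀ k, k ≠ i →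
      cRows k Z = cRows k Ud * -(L⁻¹ * (Mmat (blockDiagonal' Wb) Ud)⁻¹) := by
    intro k hk
    ext j c
    simp only [hZ, cRows, of_apply, if_neg hk, Matrix.mul_neg, Matrix.mul_assoc]
  have hUdZ : Udᵀ * blockDiagonal' Wb * Z = -(Mmat (blockDiagonal' Wb) Ud)⁻¹ := by
    rw [transpose_mul_blockDiagonal'_mul_of_cRows_eq Wb Ud Ud _ hZi hZk, ← hL, Matrix.mul_neg,
      mul_nonsing_inv_cancel_left _ _ hLinv]
  calc cRows i (1 - Hmat (blockDiagonal' Wb) (fromCols U T)) * Z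
      = cRows i Z - cRows i (Hmat (blockDiagonal' Wb) Ud * Z)
          - cRows i (Hmat (blockDiagonal' Wb) T * Z) := by
        rw [← cRows_mul, Hmat_fromCols_eq_add hWpos hfullrank, ← hUd, Matrix.sub_mul,
          Matrix.add_mul, Matrix.one_mul, sub_add_eq_sub_sub, cRows_sub, cRows_sub]
    _ = cRows i Ud := by
        rw [hZi, cRows_Hmat_mul, hUdZ, cRows_Hmat_blockDiagonal'_mul_eq_zero Wb T hnested hZi,
          Matrix.mul_neg, mul_nonsing_inv _ hS]
        simp
end

section
/- Under the stated clustered-model assumptions, let D_i be invertible with D_i'D_i = Φ_i, B_i = D_i (I−H_X)_i Φ (I−H_X)_i' D_i', and A_i = D_i' B_i^{+1/2} D_i. If B_i is invertible, then A_i satisfies the original bias-reduced-linearization criterion: A_i (I−H_X)_i Φ (I−H_X)_i' A_i' = Φ_i. -/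
open Matrix MeasureTheory

/-! Once `B_i` is invertible its Moore–Penrose inverse is `B_i⁻¹`, so any symmetric square root `S` of it
satisfies `S B_i S = 1`. Since `B_i = D_i R_i Φ R_iᵀ D_iᵀ` with `R_i = (I−H_X)_i`, the criterion
for `A_i = D_iᵀ S D_i` collapses to `D_iᵀ (S B_i S) D_i = D_iᵀ D_i = Φ_i`. -/

namespace Matrix

variable {ι κ R : Type*} [Fintype ι] [Fintype κ] [CommRing R]

lemma mul_eq_one_of_mul_mul_eq_self [DecidableEq ι] {B G : Matrix ι ι R} (hB : IsUnit B.det)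
    (h : B * G * B = B) : G * B = 1 :=
  ((isUnit_iff_isUnit_det B).2 hB).mul_left_cancel <| by rw [← Matrix.mul_assoc, h, mul_one]

lemma mul_mul_eq_one_of_mul_self_mul_eq_one [DecidableEq ι] {S B : Matrix ι ι R}
    (h : S * S * B = 1) : S * B * S = 1 := by
  rw [Matrix.mul_assoc] at h
  exact mul_eq_one_comm.1 h

lemma transpose_congr_mul_mul_transpose (D S : Matrix ι ι R) (L : Matrix ι κ R)
    (M : Matrix κ κ R) :
    Dᵀ * S * D * L * M * Lᵀ * (Dᵀ * S * D)ᵀ = Dᵀ * (S * (D * L * M * Lᵀ * Dᵀ) * Sᵀ) * D := by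
  simp only [transpose_mul, transpose_transpose, Matrix.mul_assoc]

end Matrix

theorem cr2_original_criterion_of_invertible_general
    {m p : ℕ} {n : Fin m → ℕ}
    (W : Matrix (Obs n) (Obs n) ℝ)
    (Φb : ∀ i : Fin m, Matrix (Fin (n i)) (Fin (n i)) ℝ)
    (Φ : Matrix (Obs n) (Obs n) ℝ)
    (X : Matrix (Obs n) (Fin p) ℝ)
    (D : ∀ i : Fin m, Matrix (Fin (n i)) (Fin (n i)) ℝ)
    (hDD : ∀ i, (D i)ᵀ * D i = Φb i)
    (B : ∀ i : Fin m, Matrix (Fin (n i)) (Fin (n i)) ℝ)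
    (hB : ∀ i, B i = D i * cRows i (1 - Hmat W X) * Φ *
        (cRows i (1 - Hmat W X))ᵀ * (D i)ᵀ)
    (Bp : ∀ i : Fin m, Matrix (Fin (n i)) (Fin (n i)) ℝ)
    (hBp1 : ∀ i, B i * Bp i * B i = B i)
    (Bh : ∀ i : Fin m, Matrix (Fin (n i)) (Fin (n i)) ℝ)
    (hBh1 : ∀ i, (Bh i).PosSemidef)
    (hBh2 : ∀ i, Bh i * Bh i = Bp i)
    (A : ∀ i : Fin m, Matrix (Fin (n i)) (Fin (n i)) ℝ)
    (hA : ∀ i, A i = (D i)ᵀ * Bh i * D i) :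
    ∀ i : Fin m, IsUnit (B i).det →
      A i * cRows i (1 - Hmat W X) * Φ * (cRows i (1 - Hmat W X))ᵀ * (A i)ᵀ = Φb i := by
  intro i hBi
  have hBpB : Bp i * B i = 1 := mul_eq_one_of_mul_mul_eq_self hBi (hBp1 i)
  have hBhB : Bh i * B i * Bh i = 1 :=
    mul_mul_eq_one_of_mul_self_mul_eq_one (by rw [hBh2 i, hBpB])
  have hBhsymm : (Bh i)ᵀ = Bh i := (isHermitian_iff_isSymm.1 (hBh1 i).isHermitian).eq
  rw [hA i, transpose_congr_mul_mul_transpose, ← hB i, hBhsymm, hBhB, Matrix.mul_one, hDD i]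

/-- if `B_i` is invertible then `A_i = D_iᵀ B_i^{+1/2} D_i` satisfies the
original bias-reduced-linearization criterion
`A_i (I−H_X)_i Φ (I−H_X)_iᵀ A_iᵀ = Φ_i`. -/
theorem cr2_original_criterion_of_invertible
    {m p : ℕ} {n : Fin m → ℕ}
    (Wb : ∀ i : Fin m, Matrix (Fin (n i)) (Fin (n i)) ℝ)
    (hWpd : ∀ i, (Wb i).PosDef)
    (W : Matrix (Obs n) (Obs n) ℝ) (hW : W = Matrix.blockDiagonal' Wb)
    (Φb : ∀ i : Fin m, Matrix (Fin (n i)) (Fin (n i)) ℝ)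
    (hΦpd : ∀ i, (Φb i).PosDef)
    (Φ : Matrix (Obs n) (Obs n) ℝ) (hΦ : Φ = Matrix.blockDiagonal' Φb)
    (X : Matrix (Obs n) (Fin p) ℝ)
    (hfullrank : IsUnit (Xᵀ * W * X).det)
    (D : ∀ i : Fin m, Matrix (Fin (n i)) (Fin (n i)) ℝ)
    (hDinv : ∀ i, IsUnit (D i).det)
    (hDD : ∀ i, (D i)ᵀ * D i = Φb i)
    (B : ∀ i : Fin m, Matrix (Fin (n i)) (Fin (n i)) ℝ)
    (hB : ∀ i, B i = D i * cRows i (1 - Hmat W X) * Φ *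
        (cRows i (1 - Hmat W X))ᵀ * (D i)ᵀ)
    (Bp : ∀ i : Fin m, Matrix (Fin (n i)) (Fin (n i)) ℝ)
    (hBp1 : ∀ i, B i * Bp i * B i = B i)
    (hBp2 : ∀ i, Bp i * B i * Bp i = Bp i)
    (hBp3 : ∀ i, (B i * Bp i)ᵀ = B i * Bp i)
    (hBp4 : ∀ i, (Bp i * B i)ᵀ = Bp i * B i)
    (Bh : ∀ i : Fin m, Matrix (Fin (n i)) (Fin (n i)) ℝ)
    (hBh1 : ∀ i, (Bh i).PosSemidef)
    (hBh2 : ∀ i, Bh i * Bh i = Bp i)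
    (A : ∀ i : Fin m, Matrix (Fin (n i)) (Fin (n i)) ℝ)
    (hA : ∀ i, A i = (D i)ᵀ * Bh i * D i) :
    ∀ i : Fin m, IsUnit (B i).det →
      A i * cRows i (1 - Hmat W X) * Φ * (cRows i (1 - Hmat W X))ᵀ * (A i)ᵀ = Φb i :=
  cr2_original_criterion_of_invertible_general W Φb Φ X D hDD B hB Bp hBp1 Bh hBh1 hBh2 A hA
end

section
/- Under the stated clustered-model assumptions with identity working model and identity weights (Φ = I and W = I), suppose that for cluster i the matrix I_i − X_i M_X X_i' is invertible, and set A_i = (I_i − X_i M_X X_i')^{-1/2}, its inverse symmetric square root. Then A_i satisfies the original bias-reduced-linearization criterion: A_i (I−H_X)_i (I−H_X)_i' A_i' = I_i. -/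
open Matrix MeasureTheory

/-!
Since `H_X` is the orthogonal projection onto the column space of `X`, `(I - H_X)(I - H_X)ᵀ`
equals `I - H_X`, whose cluster-`i` diagonal block is `C_i = I_i - X_i M_X X_iᵀ`. Hence the
criterion reads `A_i C_i A_i = I_i`, which holds because `A_i² = C_i⁻¹`.
-/

section ClusterBlocks

variable {m : ℕ} {n : Fin m → ℕ}

theorem cRows_mul_transpose_cRows {c : Type*} [Fintype c] (i : Fin m)
    (M N : Matrix (Obs n) c ℝ) :
    cRows i M * (cRows i N)ᵀ = (M * Nᵀ).submatrix (Sigma.mk i) (Sigma.mk i) := by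
  ext j k
  simp only [mul_apply, cRows, of_apply, transpose_apply, submatrix_apply]

theorem submatrix_mul_mul_transpose_cRows {p : ℕ} (i : Fin m)
    (X : Matrix (Obs n) (Fin p) ℝ) (M : Matrix (Fin p) (Fin p) ℝ) :
    (X * M * Xᵀ).submatrix (Sigma.mk i) (Sigma.mk i) = cRows i X * M * (cRows i X)ᵀ := by
  ext j k
  simp only [mul_apply, cRows, of_apply, transpose_apply, submatrix_apply]

end ClusterBlocks

section HatMatrix

variable {ι κ R : Type*} [Fintype ι] [Fintype κ] [DecidableEq κ] [CommRing R]

theorem transpose_hat (X : Matrix ι κ R) :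
    (X * (Xᵀ * X)⁻¹ * Xᵀ)ᵀ = X * (Xᵀ * X)⁻¹ * Xᵀ := by
  rw [transpose_mul, transpose_mul, transpose_nonsing_inv, transpose_mul, transpose_transpose,
    Matrix.mul_assoc]

theorem isIdempotentElem_hat {X : Matrix ι κ R} (hX : IsUnit (Xᵀ * X).det) :
    IsIdempotentElem (X * (Xᵀ * X)⁻¹ * Xᵀ) := by
  calc X * (Xᵀ * X)⁻¹ * Xᵀ * (X * (Xᵀ * X)⁻¹ * Xᵀ)
      = X * ((Xᵀ * X)⁻¹ * (Xᵀ * X)) * (Xᵀ * X)⁻¹ * Xᵀ := by simp only [Matrix.mul_assoc]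
    _ = X * (Xᵀ * X)⁻¹ * Xᵀ := by rw [nonsing_inv_mul _ hX, Matrix.mul_one]

end HatMatrix

theorem one_sub_mul_transpose_one_sub {ι R : Type*} [Fintype ι] [DecidableEq ι] [CommRing R]
    {H : Matrix ι ι R} (hsymm : Hᵀ = H) (hidem : IsIdempotentElem H) :
    (1 - H) * (1 - H)ᵀ = 1 - H := by
  rw [transpose_sub, transpose_one, hsymm]
  exact hidem.one_sub

theorem mul_mul_eq_one_of_mul_self_eq_inv {ι R : Type*} [Fintype ι] [DecidableEq ι]
    [CommRing R] {A C : Matrix ι ι R} (hC : IsUnit C.det) (hAA : A * A = C⁻¹) :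
    A * C * A = 1 := by
  have hAAC : A * (A * C) = 1 := by rw [← Matrix.mul_assoc, hAA, nonsing_inv_mul _ hC]
  exact mul_eq_one_comm.mp hAAC

/-- with identity working model and identity weights, if
`I_i − X_i M_X X_iᵀ` is invertible and `A_i` is its inverse symmetric square root, then
`A_i (I−H_X)_i (I−H_X)_iᵀ A_iᵀ = I_i`: the original bias-reduced-linearization
criterion holds. -/
theorem brl_criterion_identity_working_model
    {m p : ℕ} {n : Fin m → ℕ}
    (X : Matrix (Obs n) (Fin p) ℝ)
    (hfullrank : IsUnit (Xᵀ * X).det)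
    -- M_X = (XᵀX)⁻¹ and H_X = X M_X Xᵀ (identity weights)
    (MX : Matrix (Fin p) (Fin p) ℝ) (hMX : MX = (Xᵀ * X)⁻¹)
    (H : Matrix (Obs n) (Obs n) ℝ) (hH : H = X * MX * Xᵀ)
    -- C_i = I_i − X_i M_X X_iᵀ is assumed invertible
    (C : ∀ i : Fin m, Matrix (Fin (n i)) (Fin (n i)) ℝ)
    (hC : ∀ i, C i = 1 - cRows i X * MX * (cRows i X)ᵀ)
    (hCinv : ∀ i, IsUnit (C i).det)
    -- A_i = C_i^{-1/2}: the (positive definite) inverse of the symmetric positive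
    -- definite square root of C_i, i.e. the positive definite matrix with A_i² = C_i⁻¹
    (A : ∀ i : Fin m, Matrix (Fin (n i)) (Fin (n i)) ℝ)
    (hApd : ∀ i, (A i).PosDef)
    (hAA : ∀ i, A i * A i = (C i)⁻¹) :
    ∀ i : Fin m,
      A i * cRows i (1 - H) * (cRows i (1 - H))ᵀ * (A i)ᵀ = 1 := by
  intro i
  subst hMX hH
  have hblock : cRows i (1 - X * (Xᵀ * X)⁻¹ * Xᵀ) * (cRows i (1 - X * (Xᵀ * X)⁻¹ * Xᵀ))ᵀ
      = C i := by
    rw [cRows_mul_transpose_cRows,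
      one_sub_mul_transpose_one_sub (transpose_hat X) (isIdempotentElem_hat hfullrank),
      submatrix_sub, Pi.sub_apply, Pi.sub_apply, submatrix_one _ sigma_mk_injective,
      submatrix_mul_mul_transpose_cRows, hC i]
  have hAsymm : (A i)ᵀ = A i := (hApd i).isHermitian
  rw [hAsymm, Matrix.mul_assoc (A i), hblock]
  exact mul_mul_eq_one_of_mul_self_eq_inv (hCinv i) (hAA i)
end
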